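/- For every ε ∈ (0, 1/2) there exists n₀ ∈ ℕ such that for all n ≥ n₀ the following two assertions hold: (a) for every randomized strategy μ on deterministic strategies q : List {0, …, n} → {0,1}^n there exists z ∈ {0,1}^n with E_{q∼μ}[τ(q, LO_z, {z})] ≥ (1/2 − ε)·n; and (b) there exists a randomized strategy μ such that for every z ∈ {0,1}^n, E_{q∼μ}[τ(q, LO_z, {z})] ≤ (1/2 + ε)·n. -/

import Mathlib

open scoped ENNReal

namespace BBC

variable {S V : Type*}

/-- The history of observed objective values after `t` queries:
`hist q f t = [f x₁, …, f x_t]`, where `x₁ = q []` and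
`x_{t+1} = q [f x₁, …, f x_t]`. -/
def hist (q : List V → S) (f : S → V) : ℕ → List V
  | 0 => []
  | t + 1 => hist q f t ++ [f (q (hist q f t))]

/-- `queryPt q f t` is the `(t+1)`-st queried search point `x_{t+1}`. -/
def queryPt (q : List V → S) (f : S → V) (t : ℕ) : S := q (hist q f t)

/-- The hitting time of a deterministic strategy `q` on objective `f` with
target set `M`: the least `t ≥ 1` with `x_t ∈ M`, valued in `ℕ∞`
(and `⊤` if no query ever hits `M`). -/
noncomputable def hitTime (q : List V → S) (f : S → V) (M : Set S) : ℕ∞ :=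
  sInf ((fun k : ℕ => (k : ℕ∞) + 1) '' {k | queryPt q f k ∈ M})

/-- The expected hitting time of a randomized strategy `μ` (a probability mass
function on deterministic strategies) on `(f, M)`, valued in `[0,∞]`. -/
noncomputable def expHitTime (μ : PMF (List V → S)) (f : S → V) (M : Set S) : ℝ≥0∞ :=
  ∑' q, μ q * (hitTime q f M : ℝ≥0∞)

end BBC

/-- The LeadingOnes function `LO_z x`: the length of the maximal joint prefix of
`x` and `z` (0-indexed positions). -/
def LO {n : ℕ} (z x : Fin n → Bool) : ℕ :=
  ((Finset.range (n + 1)).filter fun i => ∀ j : Fin n, (j : ℕ) < i → x j = z j).sup id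

/-- `LO_z` with values in `{0,…,n}`. -/
def LOf {n : ℕ} (z x : Fin n → Bool) : Fin (n + 1) :=
  ⟨LO z x, Nat.lt_succ_of_le (Finset.sup_le fun i hi =>
    Nat.lt_succ_iff.mp (Finset.mem_range.mp (Finset.mem_filter.mp hi).1))⟩

/-!
For the upper bound, start from a uniformly random guess `r` and keep flipping the bit at the
reported LeadingOnes value. Each query then corrects exactly the first wrong bit, so `z` is queried
at step `#{j | r j ≠ z j} + 1`, whose mean is `n / 2 + 1`.

For the lower bound it suffices (Yao) to show that a deterministic strategy `q` needs about `n / 2`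
queries on average over a uniform `z`. An answer of `q` on `LO_z` is either predictable from the
bits of `z` revealed so far (the query contradicts one of them) or a new record. Hence the set of
record values among the first `T` answers, a subset of `{0, …, n}` of size at most `T`, determines
every `z` that `q` finds within `T` queries. For `T ≈ (1/2 - ε/2) n` Chebyshev's inequality, in the
form `∑ⱼ C(N, j) (N - 2j)² = N 2ᴺ`, bounds the number of such sets by `ε 2ⁿ`.
-/

open Finset BBC

namespace BBC

variable {S V : Type*}

theorem hitTime_le_of_queryPt_mem {q : List V → S} {f : S → V} {M : Set S} {k : ℕ}
    (hk : queryPt q f k ∈ M) : hitTime q f M ≤ k + 1 :=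
  sInf_le ⟨k, hk, rfl⟩

theorem add_one_le_hitTime {q : List V → S} {f : S → V} {M : Set S} {T : ℕ}
    (hT : ∀ k < T, queryPt q f k ∉ M) : (T : ℕ∞) + 1 ≤ hitTime q f M := by
  refine le_sInf ?_
  rintro _ ⟨k, hk, rfl⟩
  have : T ≤ k := not_lt.mp fun hlt => hT k hlt hk
  dsimp only
  gcongr

theorem expHitTime_map {α : Type*} (p : PMF α) (g : α → List V → S) (f : S → V) (M : Set S) :
    expHitTime (p.map g) f M = ∑' a, p a * hitTime (g a) f M := by
  classical
  simp_rw [expHitTime, PMF.map_apply, ENNReal.tsum_mul_right.symm]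
  rw [ENNReal.tsum_comm]
  refine tsum_congr fun a => ?_
  rw [tsum_eq_single (g a) fun q hq => by simp [hq]]
  simp

/-- The easy direction of Yao's principle. -/
theorem exists_le_expHitTime {ι : Type*} [Fintype ι] [Nonempty ι] (f : ι → S → V)
    (M : ι → Set S) {c : ℝ≥0∞}
    (h : ∀ q : List V → S, Fintype.card ι * c ≤ ∑ i, (hitTime q (f i) (M i) : ℝ≥0∞))
    (μ : PMF (List V → S)) : ∃ i, c ≤ expHitTime μ (f i) (M i) := by
  have hsum : ∑ _i : ι, c ≤ ∑ i, expHitTime μ (f i) (M i) := calc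
    ∑ _i : ι, c = ∑' q, μ q * (Fintype.card ι * c) := by
      rw [ENNReal.tsum_mul_right, PMF.tsum_coe, one_mul, sum_const, card_univ, nsmul_eq_mul]
    _ ≤ ∑' q, μ q * ∑ i, (hitTime q (f i) (M i) : ℝ≥0∞) :=
      ENNReal.tsum_le_tsum fun q => by gcongr; exact h q
    _ = ∑ i, expHitTime μ (f i) (M i) := by
      simp_rw [expHitTime, mul_sum]
      exact Summable.tsum_finsetSum fun _ _ => ENNReal.summable
  obtain ⟨i, -, hi⟩ := ENNReal.exists_le_of_sum_le univ_nonempty hsum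
  exact ⟨i, hi⟩

end BBC

section BinomialTail

theorem sum_range_choose_mul_sq (N : ℕ) :
    ∑ i ∈ range (N + 1), (N.choose i : ℝ) * ((N : ℝ) - 2 * i) ^ 2 = (N : ℝ) * 2 ^ N := by
  induction N with
  | zero => simp
  | succ N ih =>
    have hsub {m i : ℕ} (hi : i ∈ range (m + 1)) : ((m - i : ℕ) : ℝ) = m - i :=
      Nat.cast_sub (Nat.lt_succ_iff.mp (mem_range.mp hi))
    have hsucc {i : ℕ} (hi : i ∈ range (N + 1)) : ((N + 1 - i : ℕ) : ℝ) = N + 1 - i := by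
      rw [Nat.cast_sub (by simpa [Nat.lt_succ_iff] using (mem_range.mp hi).le)]; push_cast; ring
    have hpascal := sum_choose_succ_mul (fun i j => ((j : ℝ) - i) ^ 2) N
    calc ∑ i ∈ range (N + 1 + 1), ((N + 1).choose i : ℝ) * (((N + 1 : ℕ) : ℝ) - 2 * i) ^ 2
        = ∑ i ∈ range (N + 2), ((N + 1).choose i : ℝ) * (((N + 1 - i : ℕ) : ℝ) - i) ^ 2 :=
          sum_congr rfl fun i hi => by rw [hsub hi]; ring
      _ = ∑ i ∈ range (N + 1), (N.choose i : ℝ) * (2 * ((N : ℝ) - 2 * i) ^ 2 + 2) := by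
          rw [hpascal, ← sum_add_distrib]
          refine sum_congr rfl fun i hi => ?_
          rw [hsucc hi, hsub hi]; push_cast; ring
      _ = 2 * ∑ i ∈ range (N + 1), (N.choose i : ℝ) * ((N : ℝ) - 2 * i) ^ 2 +
            2 * ∑ i ∈ range (N + 1), (N.choose i : ℝ) := by
          rw [mul_sum, mul_sum, ← sum_add_distrib]
          exact sum_congr rfl fun i _ => by ring
      _ = ((N + 1 : ℕ) : ℝ) * 2 ^ (N + 1) := by
          rw [ih, ← Nat.cast_sum, Nat.sum_range_choose]; push_cast; ring

theorem sq_mul_sum_range_choose_le {N T : ℕ} (hT : 2 * T ≤ N) :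
    ((N : ℝ) - 2 * T) ^ 2 * ∑ i ∈ range (T + 1), (N.choose i : ℝ) ≤ (N : ℝ) * 2 ^ N := by
  have hTN : (2 * T : ℝ) ≤ N := by exact_mod_cast hT
  calc ((N : ℝ) - 2 * T) ^ 2 * ∑ i ∈ range (T + 1), (N.choose i : ℝ)
      ≤ ∑ i ∈ range (T + 1), (N.choose i : ℝ) * ((N : ℝ) - 2 * i) ^ 2 := by
        rw [mul_sum]
        refine sum_le_sum fun i hi => ?_
        have hiT : (i : ℝ) ≤ T := by exact_mod_cast Nat.lt_succ_iff.mp (mem_range.mp hi)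
        rw [mul_comm]
        gcongr
    _ ≤ ∑ i ∈ range (N + 1), (N.choose i : ℝ) * ((N : ℝ) - 2 * i) ^ 2 :=
        sum_le_sum_of_subset_of_nonneg (range_subset_range.mpr (by omega))
          fun _ _ _ => by positivity
    _ = (N : ℝ) * 2 ^ N := sum_range_choose_mul_sq N

end BinomialTail

section

variable {n : ℕ} {z z' x : Fin n → Bool}

theorem LO_le (z x : Fin n → Bool) : LO z x ≤ n := (LOf z x).is_le

theorem eq_of_lt_LO {j : Fin n} (hj : (j : ℕ) < LO z x) : x j = z j := by
  obtain ⟨_, hi, hji⟩ := Finset.lt_sup_iff.mp hj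
  exact (mem_filter.mp hi).2 j hji

theorem LO_le_of_ne {j : Fin n} (hj : x j ≠ z j) : LO z x ≤ j :=
  Finset.sup_le fun _ hi => not_lt.mp fun hji => hj ((mem_filter.mp hi).2 j hji)

theorem ne_of_val_eq_LO {j : Fin n} (hj : (j : ℕ) = LO z x) : x j ≠ z j := by
  intro heq
  have hmem : LO z x + 1 ∈
      (range (n + 1)).filter fun i => ∀ j : Fin n, (j : ℕ) < i → x j = z j := by
    refine mem_filter.mpr ⟨mem_range.mpr (by omega), fun k hk => ?_⟩
    rcases Nat.lt_succ_iff_lt_or_eq.mp hk with hk | hk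
    · exact eq_of_lt_LO hk
    · rwa [Fin.ext (hk.trans hj.symm)]
  exact (Finset.le_sup (f := id) hmem).not_gt (Nat.lt_succ_self _)

theorem LO_eq_iff : LO z x = n ↔ x = z := by
  refine ⟨fun h => funext fun j => eq_of_lt_LO (h.symm ▸ j.is_lt), ?_⟩
  rintro rfl
  refine le_antisymm (LO_le x x) (Finset.le_sup (f := id) ?_)
  simp

theorem LOf_eq_last_iff : LOf z x = Fin.last n ↔ x = z := by
  rw [Fin.ext_iff, Fin.val_last, ← LO_eq_iff]
  rfl

theorem LO_eq_of_forall_le_LO (h : ∀ j : Fin n, (j : ℕ) ≤ LO z x → z j = z' j) :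
    LO z' x = LO z x := by
  refine le_antisymm ?_ ?_
  · rcases (LO_le z x).lt_or_eq with hlt | heq
    · exact LO_le_of_ne (j := ⟨_, hlt⟩) (h ⟨_, hlt⟩ le_rfl ▸ ne_of_val_eq_LO rfl)
    · exact heq.symm ▸ LO_le z' x
  · by_contra! hlt
    have hn : LO z' x < n := hlt.trans_le (LO_le z x)
    exact ne_of_val_eq_LO (j := ⟨_, hn⟩) rfl
      ((eq_of_lt_LO (j := ⟨_, hn⟩) hlt).trans (h _ hlt.le))

end

namespace LeadingOnes

section FlipStrategy

variable {n : ℕ}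

/-- The value `v = n` flips nothing. -/
def flipAt (x : Fin n → Bool) (v : Fin (n + 1)) : Fin n → Bool :=
  fun j => xor (x j) (decide ((j : ℕ) = v))

def flipStrategy (r : Fin n → Bool) (h : List (Fin (n + 1))) : Fin n → Bool :=
  h.foldl flipAt r

def mismatches (z x : Fin n → Bool) : Finset (Fin n) := univ.filter fun j => x j ≠ z j

theorem mismatches_eq_empty_iff {z x : Fin n → Bool} : mismatches z x = ∅ ↔ x = z := by
  simp [mismatches, filter_eq_empty_iff, funext_iff]

theorem queryPt_flipStrategy_succ (r : Fin n → Bool) (f : (Fin n → Bool) → Fin (n + 1)) (t : ℕ) :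
    queryPt (flipStrategy r) f (t + 1) =
      flipAt (queryPt (flipStrategy r) f t) (f (queryPt (flipStrategy r) f t)) := by
  simp [queryPt, hist, flipStrategy, List.foldl_append]

theorem card_mismatches_flipAt_LOf {z x : Fin n → Bool} (h : x ≠ z) :
    #(mismatches z (flipAt x (LOf z x))) + 1 = #(mismatches z x) := by
  have hlt : LO z x < n := (LO_le z x).lt_of_ne (mt LO_eq_iff.mp h)
  have herase : mismatches z (flipAt x (LOf z x)) = (mismatches z x).erase ⟨_, hlt⟩ := by
    ext j
    rw [mismatches, mismatches, mem_filter, mem_erase, mem_filter]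
    by_cases hj : (j : ℕ) = LO z x
    · obtain rfl : j = ⟨_, hlt⟩ := Fin.ext hj
      have hfix : (!x ⟨_, hlt⟩) = z ⟨_, hlt⟩ := Bool.not_eq.mpr (ne_of_val_eq_LO rfl)
      simp [flipAt, LOf, hfix]
    · simp [flipAt, LOf, hj, Fin.ext_iff]
  rw [herase, card_erase_add_one]
  simpa [mismatches] using ne_of_val_eq_LO (j := ⟨_, hlt⟩) rfl

theorem card_mismatches_queryPt_flipStrategy (z r : Fin n → Bool) (t : ℕ) :
    #(mismatches z (queryPt (flipStrategy r) (LOf z) t)) = #(mismatches z r) - t := by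
  induction t with
  | zero => rfl
  | succ t ih =>
    rw [queryPt_flipStrategy_succ]
    set x := queryPt (flipStrategy r) (LOf z) t
    by_cases hx : x = z
    · have hfix : flipAt x (LOf z x) = x := by
        funext j
        simp [flipAt, LOf_eq_last_iff.mpr hx, j.is_lt.ne]
      rw [hfix]
      rw [hx, mismatches_eq_empty_iff.mpr rfl, card_empty] at ih ⊢
      omega
    · have := card_mismatches_flipAt_LOf hx
      omega

theorem hitTime_flipStrategy_le (z r : Fin n → Bool) :
    hitTime (flipStrategy r) (LOf z) {z} ≤ #(mismatches z r) + 1 := by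
  refine hitTime_le_of_queryPt_mem ?_
  rw [Set.mem_singleton_iff, ← mismatches_eq_empty_iff, ← card_eq_zero,
    card_mismatches_queryPt_flipStrategy, Nat.sub_self]

theorem two_mul_sum_card_mismatches (z : Fin n → Bool) :
    2 * ∑ r, #(mismatches z r) = n * 2 ^ n := by
  have hnot : ∑ r, #(mismatches z r) = ∑ r : Fin n → Bool, #(mismatches z fun j => !r j) :=
    (Equiv.sum_comp (Equiv.piCongrRight fun _ : Fin n => Equiv.boolNot)
      fun r => #(mismatches z r)).symm
  have hcompl (r : Fin n → Bool) : #(mismatches z r) + #(mismatches z fun j => !r j) = n := by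
    simpa [mismatches] using card_filter_add_card_filter_not (s := univ) fun j => r j ≠ z j
  rw [two_mul]
  nth_rw 2 [hnot]
  rw [← sum_add_distrib, sum_congr rfl fun r _ => hcompl r]
  simp [mul_comm]

theorem exists_expHitTime_LOf_le {ε : ℝ} (hεn : 1 ≤ ε * n) :
    ∃ μ : PMF (List (Fin (n + 1)) → (Fin n → Bool)), ∀ z : Fin n → Bool,
      expHitTime μ (LOf z) {z} ≤ ENNReal.ofReal ((1 / 2 + ε) * n) := by
  refine ⟨(PMF.uniformOfFintype _).map flipStrategy, fun z => ?_⟩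
  have hcard : Fintype.card (Fin n → Bool) = 2 ^ n := by simp
  set S := ∑ r, (#(mismatches z r) + 1)
  have hS : 2 * S = n * 2 ^ n + 2 * 2 ^ n := by
    simp [S, sum_add_distrib, mul_add, two_mul_sum_card_mismatches, hcard]
  calc expHitTime ((PMF.uniformOfFintype _).map flipStrategy) (LOf z) {z}
      ≤ ∑' r, ((2 ^ n : ℕ) : ℝ≥0∞)⁻¹ * ((#(mismatches z r) + 1 : ℕ) : ℝ≥0∞) := by
        rw [expHitTime_map]
        refine ENNReal.tsum_le_tsum fun r => ?_
        rw [PMF.uniformOfFintype_apply, hcard]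
        gcongr
        exact_mod_cast hitTime_flipStrategy_le z r
    _ = ((2 ^ n : ℕ) : ℝ≥0∞)⁻¹ * (S : ℝ≥0∞) := by
        rw [ENNReal.tsum_mul_left, tsum_fintype, Nat.cast_sum]
    _ ≤ ENNReal.ofReal ((1 / 2 + ε) * n) := by
        rw [ENNReal.inv_mul_le_iff (by positivity) (ENNReal.natCast_ne_top _),
          ← ENNReal.ofReal_natCast, ← ENNReal.ofReal_natCast, ← ENNReal.ofReal_mul (by positivity)]
        refine ENNReal.ofReal_le_ofReal ?_
        have hSR : 2 * (S : ℝ) = n * 2 ^ n + 2 * 2 ^ n := by exact_mod_cast hS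
        push_cast
        nlinarith [pow_pos (two_pos (α := ℝ)) n]

end FlipStrategy

section Records

variable {n : ℕ} (q : List (Fin (n + 1)) → Fin n → Bool)

def response (z : Fin n → Bool) (t : ℕ) : ℕ := LO z (queryPt q (LOf z) t)

def IsRecord (z : Fin n → Bool) (t : ℕ) : Prop := ∀ s < t, response q z s < response q z t

instance (z : Fin n → Bool) : DecidablePred (IsRecord q z) := fun _ => by
  unfold IsRecord; infer_instance

def recordValues (z : Fin n → Bool) (T : ℕ) : Finset ℕ :=
  ((range T).filter (IsRecord q z)).image (response q z)

variable {q} {z z' : Fin n → Bool} {t T : ℕ}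

theorem queryPt_eq_of_response_eq (h : ∀ s < t, response q z s = response q z' s) :
    queryPt q (LOf z) t = queryPt q (LOf z') t := by
  suffices hist q (LOf z) t = hist q (LOf z') t from congrArg q this
  induction t with
  | zero => rfl
  | succ t ih =>
    have ih := ih fun s hs => h s (by omega)
    have hresp : LOf z (queryPt q (LOf z) t) = LOf z' (queryPt q (LOf z') t) :=
      Fin.ext (h t (by omega))
    rw [queryPt, queryPt, ih] at hresp
    rw [hist, hist, ih, hresp]

/-- The bit at position `response q z s` is the one that query `s` got wrong. -/
theorem eq_of_le_response (h : ∀ s < t, response q z s = response q z' s) {s : ℕ} (hs : s < t)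
    {j : Fin n} (hj : (j : ℕ) ≤ response q z s) : z j = z' j := by
  have hx := queryPt_eq_of_response_eq fun u (hu : u < s) => h u (hu.trans hs)
  have hs' : response q z' s = response q z s := (h s hs).symm
  rcases hj.lt_or_eq with hlt | heq
  · rw [← eq_of_lt_LO hlt, ← eq_of_lt_LO (z := z') (hs'.symm ▸ hlt), hx]
  · rw [← Bool.not_eq.mpr (ne_of_val_eq_LO heq),
      ← Bool.not_eq.mpr (ne_of_val_eq_LO (z := z') (heq.trans hs'.symm)), hx]

theorem response_eq_of_not_isRecord (h : ∀ s < t, response q z s = response q z' s)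
    (hnr : ¬IsRecord q z t) : response q z t = response q z' t := by
  obtain ⟨s, hs, hle⟩ : ∃ s < t, response q z t ≤ response q z s := by
    simpa [IsRecord] using hnr
  rw [response, response, ← queryPt_eq_of_response_eq h]
  exact (LO_eq_of_forall_le_LO fun j hj => eq_of_le_response h hs (hj.trans hle)).symm

theorem response_le_of_mem_recordValues (h : ∀ s < t, response q z s = response q z' s)
    (hrec : IsRecord q z t) (hmem : response q z t ∈ recordValues q z' T) :
    response q z' t ≤ response q z t := by
  obtain ⟨u, hu, hval⟩ := mem_image.mp hmem
  have hrec' : IsRecord q z' u := (mem_filter.mp hu).2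
  rcases lt_trichotomy u t with hut | rfl | htu
  · exact absurd (hrec u hut) (by rw [h u hut, hval]; exact lt_irrefl _)
  · exact hval.le
  · exact hval ▸ (hrec' t htu).le

theorem response_eq_of_recordValues_eq (hR : recordValues q z T = recordValues q z' T) :
    ∀ t < T, response q z t = response q z' t := by
  intro t
  induction t using Nat.strong_induction_on with
  | _ t ih =>
    intro ht
    have h : ∀ s < t, response q z s = response q z' s := fun s hs => ih s hs (hs.trans ht)
    by_cases hz : IsRecord q z t
    · by_cases hz' : IsRecord q z' t
      · have hmem {w : Fin n → Bool} (hw : IsRecord q w t) : response q w t ∈ recordValues q w T :=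
          mem_image_of_mem _ (mem_filter.mpr ⟨mem_range.mpr ht, hw⟩)
        exact le_antisymm (response_le_of_mem_recordValues (fun s hs => (h s hs).symm) hz'
          (hR ▸ hmem hz')) (response_le_of_mem_recordValues h hz (hR ▸ hmem hz))
      · exact (response_eq_of_not_isRecord (fun s hs => (h s hs).symm) hz').symm
    · exact response_eq_of_not_isRecord h hz

theorem eq_of_recordValues_eq (hz : ∃ k < T, queryPt q (LOf z) k = z)
    (hR : recordValues q z T = recordValues q z' T) : z = z' := by
  obtain ⟨k, hk, hzk⟩ := hz
  have h := response_eq_of_recordValues_eq hR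
  have hx := queryPt_eq_of_response_eq fun s (hs : s < k) => h s (hs.trans hk)
  have hz'k : queryPt q (LOf z') k = z' := by
    rw [← LO_eq_iff, ← response, ← h k hk, response, hzk, LO_eq_iff]
  rw [← hzk, hx, hz'k]

theorem recordValues_mem_powersetCard (z : Fin n → Bool) (T : ℕ) :
    recordValues q z T ∈ (range (T + 1)).biUnion fun j => powersetCard j (range (n + 1)) := by
  refine mem_biUnion.mpr ⟨_, mem_range.mpr (Nat.lt_succ_of_le ?_), mem_powersetCard.mpr ⟨?_, rfl⟩⟩
  · exact card_image_le.trans ((card_filter_le _ _).trans (card_range T).le)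
  · intro v hv
    obtain ⟨t, -, rfl⟩ := mem_image.mp hv
    exact mem_range.mpr (Nat.lt_succ_of_le (LO_le _ _))

variable (q) in
theorem card_filter_exists_queryPt_eq_le (T : ℕ) :
    #(univ.filter fun z : Fin n → Bool => ∃ k < T, queryPt q (LOf z) k = z) ≤
      ∑ j ∈ range (T + 1), (n + 1).choose j := by
  calc _ ≤ #((range (T + 1)).biUnion fun j => powersetCard j (range (n + 1))) :=
        card_le_card_of_injOn (recordValues q · T)
          (fun z _ => recordValues_mem_powersetCard z T)
          (fun z hz _ _ hR => eq_of_recordValues_eq (mem_filter.mp hz).2 hR)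
    _ ≤ ∑ j ∈ range (T + 1), #(powersetCard j (range (n + 1))) := card_biUnion_le
    _ = ∑ j ∈ range (T + 1), (n + 1).choose j := by simp_rw [card_powersetCard, card_range]

variable (q) in
theorem sub_sum_choose_mul_le_sum_hitTime (T : ℕ) :
    ((2 ^ n - ∑ j ∈ range (T + 1), (n + 1).choose j : ℕ) : ℝ≥0∞) * ((T : ℝ≥0∞) + 1) ≤
      ∑ z : Fin n → Bool, (hitTime q (LOf z) {z} : ℝ≥0∞) := by
  set hit := univ.filter fun z : Fin n → Bool => ∃ k < T, queryPt q (LOf z) k = z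
  have hcard : 2 ^ n - ∑ j ∈ range (T + 1), (n + 1).choose j ≤ #(univ \ hit) := by
    rw [card_sdiff_of_subset (subset_univ _), card_univ]
    simpa using Nat.sub_le_sub_left (card_filter_exists_queryPt_eq_le q T) _
  calc _ ≤ (#(univ \ hit) : ℝ≥0∞) * ((T : ℝ≥0∞) + 1) := by gcongr
    _ = ∑ z ∈ univ \ hit, ((T : ℝ≥0∞) + 1) := by rw [sum_const, nsmul_eq_mul]
    _ ≤ ∑ z ∈ univ \ hit, (hitTime q (LOf z) {z} : ℝ≥0∞) := by
        refine sum_le_sum fun z hz => ?_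
        have hmiss : ∀ k < T, queryPt q (LOf z) k ∉ ({z} : Set _) := fun k hk hkz =>
          (mem_sdiff.mp hz).2 (mem_filter.mpr ⟨mem_univ _, k, hk, hkz⟩)
        exact_mod_cast add_one_le_hitTime hmiss
    _ ≤ _ := sum_le_sum_of_subset sdiff_subset

end Records

section LowerBound

variable {n : ℕ} {ε : ℝ}

theorem sum_choose_le_mul_two_pow (hε : 0 < ε) (hε1 : ε < 1) (hn : 2 * (n + 1) ≤ ε ^ 3 * n ^ 2) :
    ∑ j ∈ range (⌊(1 / 2 - ε / 2) * n⌋₊ + 1), ((n + 1).choose j : ℝ) ≤ ε * 2 ^ n := by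
  set T := ⌊(1 / 2 - ε / 2) * n⌋₊
  have hn0 : (0 : ℝ) < n := Nat.cast_pos.mpr (Nat.pos_of_ne_zero (by rintro rfl; norm_num at hn))
  have hT : (T : ℝ) ≤ (1 / 2 - ε / 2) * n := Nat.floor_le (by nlinarith)
  have h2T : 2 * T ≤ n + 1 := by
    have : (2 * T : ℝ) ≤ n + 1 := by nlinarith
    exact_mod_cast this
  have hgap : ε * n ≤ ((n + 1 : ℕ) : ℝ) - 2 * T := by push_cast; nlinarith
  have hεn : 0 < (ε * n) ^ 2 := by positivity
  have htail := sq_mul_sum_range_choose_le h2T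
  refine le_of_mul_le_mul_left ?_ hεn
  calc (ε * n) ^ 2 * ∑ j ∈ range (T + 1), ((n + 1).choose j : ℝ)
      ≤ (((n + 1 : ℕ) : ℝ) - 2 * T) ^ 2 * ∑ j ∈ range (T + 1), ((n + 1).choose j : ℝ) := by
        gcongr
    _ ≤ ((n + 1 : ℕ) : ℝ) * 2 ^ (n + 1) := htail
    _ = 2 * (n + 1) * 2 ^ n := by push_cast; ring
    _ ≤ ε ^ 3 * n ^ 2 * 2 ^ n := by gcongr
    _ = (ε * n) ^ 2 * (ε * 2 ^ n) := by ring

theorem two_pow_mul_le_sum_hitTime (hε : 0 < ε) (hε1 : ε < 1)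
    (hn : 2 * (n + 1) ≤ ε ^ 3 * n ^ 2) (q : List (Fin (n + 1)) → Fin n → Bool) :
    ((2 ^ n : ℕ) : ℝ≥0∞) * ENNReal.ofReal ((1 / 2 - ε) * n) ≤
      ∑ z : Fin n → Bool, (hitTime q (LOf z) {z} : ℝ≥0∞) := by
  set T := ⌊(1 / 2 - ε / 2) * n⌋₊
  set S := ∑ j ∈ range (T + 1), (n + 1).choose j
  have hS : (S : ℝ) ≤ ε * 2 ^ n := by
    exact_mod_cast sum_choose_le_mul_two_pow hε hε1 hn
  have hSle : S ≤ 2 ^ n := by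
    have : (S : ℝ) ≤ 2 ^ n := hS.trans (by nlinarith [pow_pos (two_pos (α := ℝ)) n])
    exact_mod_cast this
  have hT : (1 / 2 - ε / 2) * n < T + 1 := Nat.lt_floor_add_one _
  have hreal : 2 ^ n * ((1 / 2 - ε) * n) ≤ (2 ^ n - S : ℝ) * (T + 1) := by
    have h1 : (1 - ε) * 2 ^ n ≤ 2 ^ n - (S : ℝ) := by linarith
    have hsq : 0 ≤ 2 ^ n * (n : ℝ) * ε ^ 2 := by positivity
    calc 2 ^ n * ((1 / 2 - ε) * n) ≤ (1 - ε) * 2 ^ n * ((1 / 2 - ε / 2) * n) := by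
          nlinarith
      _ ≤ (2 ^ n - (S : ℝ)) * (T + 1) :=
          mul_le_mul h1 hT.le (by nlinarith) (by nlinarith [pow_pos (two_pos (α := ℝ)) n])
  refine le_trans ?_ (sub_sum_choose_mul_le_sum_hitTime q T)
  rw [show ((T : ℝ≥0∞) + 1) = ((T + 1 : ℕ) : ℝ≥0∞) by push_cast; rfl,
    ← ENNReal.ofReal_natCast, ← ENNReal.ofReal_natCast (2 ^ n - S),
    ← ENNReal.ofReal_natCast (T + 1), ← ENNReal.ofReal_mul (by positivity),
    ← ENNReal.ofReal_mul (by positivity)]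
  refine ENNReal.ofReal_le_ofReal ?_
  push_cast [Nat.cast_sub hSle]
  exact hreal

theorem exists_le_expHitTime_LOf (hε : 0 < ε) (hε1 : ε < 1) (hn : 2 * (n + 1) ≤ ε ^ 3 * n ^ 2)
    (μ : PMF (List (Fin (n + 1)) → (Fin n → Bool))) :
    ∃ z : Fin n → Bool, ENNReal.ofReal ((1 / 2 - ε) * n) ≤ expHitTime μ (LOf z) {z} := by
  refine exists_le_expHitTime (fun z => LOf z) (fun z => {z}) (fun q => ?_) μ
  have hcard : Fintype.card (Fin n → Bool) = 2 ^ n := by simp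
  exact hcard ▸ two_pow_mul_le_sum_hitTime hε hε1 hn q

end LowerBound

end LeadingOnes

/-- The unrestricted black-box complexity of `{LO_z | z}` is `n/2 ± o(n)`. -/
theorem stmt7 : ∀ ε : ℝ, 0 < ε → ε < 1 / 2 → ∃ n₀ : ℕ, ∀ n : ℕ, n₀ ≤ n →
    (∀ μ : PMF (List (Fin (n + 1)) → (Fin n → Bool)), ∃ z : Fin n → Bool,
        ENNReal.ofReal ((1 / 2 - ε) * n) ≤ BBC.expHitTime μ (LOf z) {z}) ∧
    (∃ μ : PMF (List (Fin (n + 1)) → (Fin n → Bool)), ∀ z : Fin n → Bool,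
        BBC.expHitTime μ (LOf z) {z} ≤ ENNReal.ofReal ((1 / 2 + ε) * n)) := by
  intro ε hε hε2
  refine ⟨⌈4 / ε ^ 3⌉₊ + 1, fun n hn => ?_⟩
  have hn1 : (1 : ℝ) ≤ n := by exact_mod_cast (Nat.le_add_left 1 _).trans hn
  have hεn : 4 ≤ ε ^ 3 * n := by
    have : 4 / ε ^ 3 ≤ n := (Nat.le_ceil _).trans (by exact_mod_cast (Nat.le_succ _).trans hn)
    rwa [div_le_iff₀ (by positivity), mul_comm] at this
  refine ⟨LeadingOnes.exists_le_expHitTime_LOf hε (by linarith) ?_,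
    LeadingOnes.exists_expHitTime_LOf_le ?_⟩
  · nlinarith
  · have hcube : 0 ≤ ε * n * (1 - ε ^ 2) := mul_nonneg (by positivity) (by nlinarith)
    nlinarith
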